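/- Fix α ∈ (0,1), λ > 0, an integer m ≥ 1 and an integer k with 1 ≤ k ≤ m. Let f_α : (0,∞) → [0,∞) be a measurable function with ∫₀^∞ f_α(t) dt = 1 and ∫₀^∞ e^{-μ t} f_α(t) dt = e^{-μ^α} for all μ ≥ 0. Let S be a random variable with density t ↦ λ^{m-k-α} e^{λ^α} t^{m-k} e^{-λ t} f_α(t)/(α Ω_{m-k}(λ^α)) on (0,∞), and let G be an independent Gamma(k) random variable. Then the random variable G/(λ S) has Lebesgue density y ↦ (Ω_m(λ^α (1+y)^α)/(Γ(k) Ω_{m-k}(λ^α))) y^{k-1} (1+y)^{α-m} e^{-(λ^α(1+y)^α - λ^α)} on (0,∞). -/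

import Mathlib

open MeasureTheory Set

/-- The rising factorial `(x)_m = x (x+1) ⋯ (x+m-1)`. -/
noncomputable def risingFactorial (x : ℝ) (m : ℕ) : ℝ := ∏ i ∈ Finset.range m, (x + i)

/-- The generalized Stirling number
`S_α(m,k) = (1/(α^k k!)) Σ_{j=1}^k (-1)^j C(k,j) (-jα)_m`. -/
noncomputable def genStirling (α : ℝ) (m k : ℕ) : ℝ :=
  (1 / (α ^ k * (Nat.factorial k : ℝ))) *
    ∑ j ∈ Finset.Icc 1 k, (-1 : ℝ) ^ j * (Nat.choose k j : ℝ) * risingFactorial (-(j : ℝ) * α) m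

/-- `P_α^{(m)}(k) = α^{k-1} Γ(k) S_α(m,k) / Γ(m)`. -/
noncomputable def Pstat (α : ℝ) (m k : ℕ) : ℝ :=
  α ^ ((k : ℝ) - 1) * Real.Gamma (k : ℝ) * genStirling α m k / Real.Gamma (m : ℝ)

/-- `Ω_m(x) = Γ(m) Σ_{ℓ=1}^m P_α^{(m)}(ℓ) x^{ℓ-1}/Γ(ℓ)` for `m ≥ 1`, and `Ω_0(x) = x⁻¹/α`. -/
noncomputable def Omega (α : ℝ) (m : ℕ) (x : ℝ) : ℝ :=
  if m = 0 then x⁻¹ / α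
  else Real.Gamma (m : ℝ) * ∑ ℓ ∈ Finset.Icc 1 m, Pstat α m ℓ * x ^ (ℓ - 1) / Real.Gamma (ℓ : ℝ)

/-- The Gamma(a) distribution (rate 1), with density `t^{a-1} e^{-t}/Γ(a)` on `(0,∞)`. -/
noncomputable def gammaM (a : ℝ) : Measure ℝ :=
  volume.withDensity ((Set.Ioi (0 : ℝ)).indicator fun t =>
    ENNReal.ofReal (t ^ (a - 1) * Real.exp (-t) / Real.Gamma a))

/-!
Differentiating `∫ e^{-st} f_α(t) dt = e^{-s^α}` under the integral sign `j` times gives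
`∫ t^j e^{-st} f_α(t) dt = α Ω_j(s^α) s^{α-j} e^{-s^α}`: the induction step is the recursion
`S_α(j+1, ℓ+1) = (j - (ℓ+1)α) S_α(j, ℓ+1) + S_α(j, ℓ)`. As the left side is positive,
`Ω_j(s^α) > 0`.
Given `S = s`, the variable `G/(λs)` has density `y ↦ λs g_k(λsy)`, and integrating this against the
density of `S` produces the moment of order `m` at `λ(1+y)`, which is the stated density.
-/

open Nat

lemma Finset.sum_Icc_one_eq_sum_range {M : Type*} [AddCommMonoid M] (g : ℕ → M) (n : ℕ) :
    ∑ ℓ ∈ Finset.Icc 1 n, g ℓ = ∑ i ∈ Finset.range n, g (i + 1) := by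
  rw [Finset.range_eq_Ico, Finset.sum_Ico_add', zero_add, Finset.Ico_add_one_right_eq_Icc]

lemma risingFactorial_zero (x : ℝ) : risingFactorial x 0 = 1 := Finset.prod_range_zero _

lemma risingFactorial_succ (x : ℝ) (m : ℕ) :
    risingFactorial x (m + 1) = risingFactorial x m * (x + m) :=
  Finset.prod_range_succ _ _

lemma genStirling_zero_right (α : ℝ) (m : ℕ) : genStirling α m 0 = 0 := by
  simp [genStirling]

lemma genStirling_zero_left (α : ℝ) {k : ℕ} (hk : k ≠ 0) :
    genStirling α 0 k = -(1 / (α ^ k * k !)) := by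
  have hsum : ∑ j ∈ Finset.Icc 1 k, (-1 : ℝ) ^ j * (k.choose j : ℝ) = -1 := by
    have h := Int.alternating_sum_range_choose_of_ne hk
    rw [Nat.range_succ_eq_Icc_zero, ← Finset.insert_Icc_add_one_left_eq_Icc (Nat.zero_le k),
      Finset.sum_insert (by simp)] at h
    have h' : (1 : ℝ) + ∑ j ∈ Finset.Icc 1 k, (-1 : ℝ) ^ j * (k.choose j : ℝ) = 0 := by
      exact_mod_cast (by simpa using h)
    linarith
  simp only [genStirling, risingFactorial_zero, mul_one, hsum]
  ring

lemma genStirling_succ_succ {α : ℝ} (hα : α ≠ 0) (m k : ℕ) :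
    genStirling α (m + 1) (k + 1)
      = (m - (k + 1) * α) * genStirling α m (k + 1) + genStirling α m k := by
  set A : ℕ → ℕ → ℝ := fun n j => (-1 : ℝ) ^ j * n.choose j * risingFactorial (-(j : ℝ) * α) m
  have hchoose : ∀ j ∈ Finset.Icc 1 (k + 1),
      (-1 : ℝ) ^ j * risingFactorial (-(j : ℝ) * α) m * ((k + 1).choose j * (k + 1 - j : ℝ))
        = (k + 1) * A k j := by
    intro j hj
    have h := Nat.choose_mul_succ_eq k j
    rw [← Nat.cast_inj (R := ℝ), Nat.cast_mul, Nat.cast_mul,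
      Nat.cast_sub (Finset.mem_Icc.1 hj).2] at h
    push_cast at h
    simp only [A]
    linear_combination (-1 : ℝ) ^ j * risingFactorial (-(j : ℝ) * α) m * h.symm
  have hsum : ∑ j ∈ Finset.Icc 1 (k + 1),
        (-1 : ℝ) ^ j * (k + 1).choose j * risingFactorial (-(j : ℝ) * α) (m + 1)
      = (m - (k + 1) * α) * ∑ j ∈ Finset.Icc 1 (k + 1), A (k + 1) j
        + α * (k + 1) * ∑ j ∈ Finset.Icc 1 k, A k j := by
    -- split `-jα + m = (m - (k+1)α) + (k + 1 - j)α` in the last factor of `(-jα)_{m+1}`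
    calc _ = ∑ j ∈ Finset.Icc 1 (k + 1), ((m - (k + 1) * α) * A (k + 1) j
          + α * ((-1 : ℝ) ^ j * risingFactorial (-(j : ℝ) * α) m
            * ((k + 1).choose j * (k + 1 - j : ℝ)))) := by
          refine Finset.sum_congr rfl fun j _ => ?_
          simp only [A, risingFactorial_succ]
          ring
      _ = (m - (k + 1) * α) * ∑ j ∈ Finset.Icc 1 (k + 1), A (k + 1) j
          + α * (k + 1) * ∑ j ∈ Finset.Icc 1 (k + 1), A k j := by
          rw [Finset.sum_add_distrib, ← Finset.mul_sum, ← Finset.mul_sum,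
            Finset.sum_congr rfl hchoose, ← Finset.mul_sum, mul_assoc]
      _ = _ := by
          rw [Finset.sum_Icc_succ_top (by omega : 1 ≤ k + 1) (A k)]
          simp [A]
  have hfac : ((k + 1)! : ℝ) = (k + 1) * k ! := by push_cast [Nat.factorial_succ]; ring
  simp only [genStirling, hsum, hfac, A]
  field_simp
  ring

lemma genStirling_eq_zero_of_lt {α : ℝ} (hα : α ≠ 0) {m ℓ : ℕ} (hm : 1 ≤ m) (h : m < ℓ) :
    genStirling α m ℓ = 0 := by
  obtain ⟨ℓ, rfl⟩ : ∃ ℓ', ℓ = ℓ' + 1 := ⟨ℓ - 1, by omega⟩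
  induction m, hm using Nat.le_induction generalizing ℓ with
  | base =>
    rw [genStirling_succ_succ hα, genStirling_zero_left α (by omega),
      genStirling_zero_left α (by omega), Nat.factorial_succ]
    push_cast
    field_simp
    ring
  | succ m hm ih =>
    obtain ⟨ℓ, rfl⟩ : ∃ ℓ', ℓ = ℓ' + 1 := ⟨ℓ - 1, by omega⟩
    rw [genStirling_succ_succ hα, ih _ (by omega), ih _ (by omega)]
    ring

lemma Omega_one {α : ℝ} (hα : α ≠ 0) (x : ℝ) : Omega α 1 x = 1 := by
  simp [Omega, Pstat, genStirling, risingFactorial, hα]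

noncomputable def omegaSum (α : ℝ) (j : ℕ) (s : ℝ) : ℝ :=
  ∑ i ∈ Finset.range j, α ^ i * genStirling α j (i + 1) * s ^ (α * (i + 1) - j)

lemma Omega_rpow_mul_rpow {α : ℝ} (hα : 0 < α) {j : ℕ} (hj : 1 ≤ j) {s : ℝ} (hs : 0 < s) :
    Omega α j (s ^ α) * s ^ (α - j) = omegaSum α j s := by
  have hΓ : ∀ n : ℕ, 1 ≤ n → Real.Gamma n ≠ 0 := fun n hn =>
    (Real.Gamma_pos_of_pos (by exact_mod_cast hn)).ne'
  rw [Omega, if_neg (by omega), omegaSum, Finset.sum_Icc_one_eq_sum_range, Finset.mul_sum,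
    Finset.sum_mul]
  refine Finset.sum_congr rfl fun i _ => ?_
  have hpow : s ^ (α * (i + 1) - j) = (s ^ α) ^ i * s ^ (α - j) := by
    rw [← Real.rpow_natCast, ← Real.rpow_mul hs.le, ← Real.rpow_add hs]
    ring_nf
  rw [Pstat, Nat.cast_add_one, add_sub_cancel_right, Real.rpow_natCast, Nat.add_sub_cancel, hpow]
  field_simp [hΓ j hj, hΓ (i + 1) (by omega)]

lemma hasDerivAt_omegaSum {α : ℝ} (hα : α ≠ 0) {j : ℕ} (hj : 1 ≤ j) {s : ℝ} (hs : 0 < s) :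
    HasDerivAt (omegaSum α j) (α * s ^ (α - 1) * omegaSum α j s - omegaSum α (j + 1) s) s := by
  have hderiv : HasDerivAt (omegaSum α j) (∑ i ∈ Finset.range j,
      α ^ i * genStirling α j (i + 1) * ((α * (i + 1) - j) * s ^ (α * (i + 1) - j - 1))) s :=
    HasDerivAt.fun_sum fun i _ => (Real.hasDerivAt_rpow_const (Or.inl hs.ne')).const_mul _
  refine hderiv.congr_deriv ?_
  -- as sums over `i < j + 1` (padded by `S_α(j, j + 1) = 0` and `S_α(j, 0) = 0`) the two sides
  -- agree termwise by `genStirling_succ_succ`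
  have hext : ∑ i ∈ Finset.range j,
      α ^ i * genStirling α j (i + 1) * ((α * (i + 1) - j) * s ^ (α * (i + 1) - j - 1))
      = ∑ i ∈ Finset.range (j + 1),
      α ^ i * genStirling α j (i + 1) * ((α * (i + 1) - j) * s ^ (α * (i + 1) - (j + 1)))  := by
    rw [Finset.sum_range_succ, genStirling_eq_zero_of_lt hα hj (by omega)]
    simp only [mul_zero, zero_mul, add_zero, sub_sub]
  have hshift : α * s ^ (α - 1) * omegaSum α j s = ∑ i ∈ Finset.range (j + 1),
      α ^ i * genStirling α j i * s ^ (α * (i + 1) - (j + 1)) := by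
    rw [Finset.sum_range_succ', genStirling_zero_right, omegaSum, Finset.mul_sum]
    simp only [mul_zero, zero_mul, add_zero]
    refine Finset.sum_congr rfl fun i _ => ?_
    have hpow : s ^ (α * ((i + 1 : ℕ) + 1) - (j + 1)) = s ^ (α - 1) * s ^ (α * (i + 1) - j) := by
      rw [← Real.rpow_add hs]
      push_cast
      ring_nf
    rw [hpow]
    ring
  rw [hext, hshift, omegaSum, ← Finset.sum_sub_distrib]
  refine Finset.sum_congr rfl fun i _ => ?_
  push_cast
  rw [genStirling_succ_succ hα]
  ring

/-- `(-1)^j (d/ds)^j e^{-s^α}`, i.e. the Laplace transform of `t^j f_α(t)` at `s`. -/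
noncomputable def tiltedMoment (α : ℝ) (j : ℕ) (s : ℝ) : ℝ :=
  α * Omega α j (s ^ α) * s ^ (α - j) * Real.exp (-(s ^ α))

lemma tiltedMoment_zero {α : ℝ} (hα : α ≠ 0) {s : ℝ} (hs : 0 < s) :
    tiltedMoment α 0 s = Real.exp (-(s ^ α)) := by
  have : s ^ α ≠ 0 := (Real.rpow_pos_of_pos hs α).ne'
  simp only [tiltedMoment, Omega, if_pos, Nat.cast_zero, sub_zero]
  field_simp

lemma tiltedMoment_eq_omegaSum {α : ℝ} (hα : 0 < α) {j : ℕ} (hj : 1 ≤ j) {s : ℝ} (hs : 0 < s) :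
    tiltedMoment α j s = α * omegaSum α j s * Real.exp (-(s ^ α)) := by
  rw [tiltedMoment, mul_assoc α, Omega_rpow_mul_rpow hα hj hs]

lemma hasDerivAt_tiltedMoment {α : ℝ} (hα : 0 < α) (j : ℕ) {s : ℝ} (hs : 0 < s) :
    HasDerivAt (tiltedMoment α j) (-tiltedMoment α (j + 1) s) s := by
  have hexp : HasDerivAt (fun u : ℝ => Real.exp (-(u ^ α)))
      (Real.exp (-(s ^ α)) * -(α * s ^ (α - 1))) s :=
    (Real.hasDerivAt_rpow_const (Or.inl hs.ne')).neg.exp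
  rcases Nat.eq_zero_or_pos j with rfl | hj
  · have heq : (fun u : ℝ => Real.exp (-(u ^ α))) =ᶠ[nhds s] tiltedMoment α 0 := by
      filter_upwards [Ioi_mem_nhds hs] with u hu using (tiltedMoment_zero hα.ne' hu).symm
    refine (hexp.congr_of_eventuallyEq heq.symm).congr_deriv ?_
    simp only [tiltedMoment, zero_add, Omega_one hα.ne', Nat.cast_one]
    ring
  · have heq : (fun u => α * omegaSum α j u * Real.exp (-(u ^ α))) =ᶠ[nhds s] tiltedMoment α j := by
      filter_upwards [Ioi_mem_nhds hs] with u hu using (tiltedMoment_eq_omegaSum hα hj hu).symm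
    refine ((((hasDerivAt_omegaSum hα.ne' hj hs).const_mul α).mul hexp).congr_of_eventuallyEq
      heq.symm).congr_deriv ?_
    rw [tiltedMoment_eq_omegaSum hα (by omega) hs]
    ring

lemma map_div_const_withDensity {a : ℝ} (ha : 0 < a) {q : ℝ → ENNReal} (hq : Measurable q) :
    (volume.withDensity q).map (· / a)
      = volume.withDensity fun y => ENNReal.ofReal a * q (a * y) := by
  ext A hA
  have hB : MeasurableSet ((· / a) ⁻¹' A) := measurable_div_const a hA
  have hpre : (a * ·) ⁻¹' ((· / a) ⁻¹' A) = A := by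
    ext y; simp [mul_div_cancel_left₀ y ha.ne']
  rw [Measure.map_apply (measurable_div_const a) hA, withDensity_apply _ hB, withDensity_apply _ hA,
    lintegral_const_mul' _ _ ENNReal.ofReal_ne_top]
  conv_lhs => rw [← Real.smul_map_volume_mul_left ha.ne']
  rw [Measure.restrict_smul, lintegral_smul_measure,
    setLIntegral_map hB hq (measurable_const_mul a), hpre, abs_of_pos ha, smul_eq_mul]

lemma map_div_const_mul_prod_withDensity {c : ℝ} (hc : 0 < c) {p q : ℝ → ENNReal}
    (hp : Measurable p) (hq : Measurable q) :
    (((volume.restrict (Ioi 0)).withDensity p).prod (volume.withDensity q)).map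
        (fun x : ℝ × ℝ => x.2 / (c * x.1))
      = volume.withDensity fun y =>
          ∫⁻ s in Ioi 0, p s * (ENNReal.ofReal (c * s) * q (c * s * y)) := by
  set r := fun x : ℝ × ℝ => x.2 / (c * x.1)
  have hr : Measurable r := by fun_prop
  ext A hA
  have hsec : ∀ s ∈ Ioi (0 : ℝ), volume.withDensity q (Prod.mk s ⁻¹' (r ⁻¹' A))
      = ∫⁻ y in A, ENNReal.ofReal (c * s) * q (c * s * y) := by
    intro s hs
    rw [← withDensity_apply _ hA, ← map_div_const_withDensity (mul_pos hc hs) hq,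
      Measure.map_apply (measurable_div_const _) hA]
    rfl
  rw [Measure.map_apply hr hA, Measure.prod_apply (hr hA),
    lintegral_withDensity_eq_lintegral_mul _ hp (measurable_measure_prodMk_left (hr hA)),
    withDensity_apply _ hA]
  calc _ = ∫⁻ s in Ioi 0, ∫⁻ y in A, p s * (ENNReal.ofReal (c * s) * q (c * s * y)) :=
        setLIntegral_congr_fun measurableSet_Ioi fun s hs => by
          rw [Pi.mul_apply, hsec s hs]
          exact (lintegral_const_mul _ (by fun_prop)).symm
    _ = _ := lintegral_lintegral_swap (by fun_prop)

lemma pow_mul_exp_neg_mul_le {c t : ℝ} (hc : 0 < c) (ht : 0 ≤ t) (j : ℕ) :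
    t ^ j * Real.exp (-c * t) ≤ j ! / c ^ j := by
  have h := Real.pow_div_factorial_le_exp _ (mul_nonneg hc.le ht) j
  have hfac : (0 : ℝ) < j ! := by positivity
  rw [div_le_iff₀ hfac, mul_pow] at h
  rw [le_div_iff₀ (by positivity), neg_mul, Real.exp_neg]
  calc t ^ j * (Real.exp (c * t))⁻¹ * c ^ j = c ^ j * t ^ j * (Real.exp (c * t))⁻¹ := by ring
    _ ≤ Real.exp (c * t) * j ! * (Real.exp (c * t))⁻¹ := by gcongr
    _ = j ! := by field_simp

section Laplace

variable {f : ℝ → ℝ} {α : ℝ}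

lemma integrableOn_pow_mul_exp_neg_mul
    (hf : ∀ c : ℝ, 0 < c → IntegrableOn (fun t => Real.exp (-c * t) * f t) (Ioi 0))
    {c : ℝ} (hc : 0 < c) (j : ℕ) :
    IntegrableOn (fun t => t ^ j * Real.exp (-c * t) * f t) (Ioi 0) := by
  have hsplit : (fun t => t ^ j * Real.exp (-c * t) * f t)
      = fun t => t ^ j * Real.exp (-(c / 2) * t) * (Real.exp (-(c / 2) * t) * f t) := by
    ext t
    rw [show -c * t = -(c / 2) * t + -(c / 2) * t by ring, Real.exp_add]
    ring
  rw [hsplit]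
  refine (hf (c / 2) (half_pos hc)).bdd_mul (c := j ! / (c / 2) ^ j)
    (Continuous.aestronglyMeasurable (by fun_prop)) ?_
  refine (ae_restrict_iff' measurableSet_Ioi).2 (Filter.Eventually.of_forall fun t ht => ?_)
  rw [Real.norm_of_nonneg (mul_nonneg (pow_nonneg (le_of_lt ht) j) (Real.exp_pos _).le)]
  exact pow_mul_exp_neg_mul_le (half_pos hc) (le_of_lt ht) j

lemma hasDerivAt_integral_pow_mul_exp_neg_mul
    (hf : ∀ c : ℝ, 0 < c → IntegrableOn (fun t => Real.exp (-c * t) * f t) (Ioi 0))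
    (j : ℕ) {s : ℝ} (hs : 0 < s) :
    HasDerivAt (fun u => ∫ t in Ioi 0, t ^ j * Real.exp (-u * t) * f t)
      (-∫ t in Ioi 0, t ^ (j + 1) * Real.exp (-s * t) * f t) s := by
  have hball : Metric.ball s (s / 2) ⊆ Ioi (s / 2) := fun u hu => by
    have := (abs_lt.1 (Metric.mem_ball.1 hu)).1
    simp only [mem_Ioi]
    linarith
  have hderiv : ∀ t u : ℝ, HasDerivAt (fun u => t ^ j * Real.exp (-u * t) * f t)
      (-(t ^ (j + 1) * Real.exp (-u * t) * f t)) u := fun t u => by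
    refine ((((hasDerivAt_neg u).mul_const t).exp.const_mul (t ^ j)).mul_const (f t)).congr_deriv ?_
    ring
  rw [← integral_neg]
  refine (hasDerivAt_integral_of_dominated_loc_of_deriv_le (μ := volume.restrict (Ioi 0))
    (F := fun u t => t ^ j * Real.exp (-u * t) * f t) (Metric.ball_mem_nhds s (half_pos hs))
    ?_ (integrableOn_pow_mul_exp_neg_mul hf hs j)
    (integrableOn_pow_mul_exp_neg_mul hf hs (j + 1)).neg.aestronglyMeasurable ?_
    (integrableOn_pow_mul_exp_neg_mul hf (half_pos hs) (j + 1)).norm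
    (Filter.Eventually.of_forall fun t u _ => hderiv t u)).2
  · filter_upwards [Ioi_mem_nhds hs] with u hu
    exact (integrableOn_pow_mul_exp_neg_mul hf hu j).aestronglyMeasurable
  · refine (ae_restrict_iff' measurableSet_Ioi).2 (Filter.Eventually.of_forall fun t ht u hu => ?_)
    have ht : 0 < t := ht
    have hu : s / 2 < u := hball hu
    rw [norm_neg, norm_mul, norm_mul, norm_mul, norm_mul]
    gcongr
    simp only [Real.norm_of_nonneg (Real.exp_pos _).le, Real.exp_le_exp]
    nlinarith

lemma integrableOn_exp_neg_mul_of_laplace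
    (hf : ∀ c : ℝ, 0 < c → ∫ t in Ioi 0, Real.exp (-c * t) * f t = Real.exp (-(c ^ α)))
    {c : ℝ} (hc : 0 < c) : IntegrableOn (fun t => Real.exp (-c * t) * f t) (Ioi 0) :=
  Integrable.of_integral_ne_zero (by rw [hf c hc]; exact (Real.exp_pos _).ne')

lemma integral_pow_mul_exp_neg_mul (hα : 0 < α)
    (hf : ∀ c : ℝ, 0 < c → ∫ t in Ioi 0, Real.exp (-c * t) * f t = Real.exp (-(c ^ α)))
    (j : ℕ) {s : ℝ} (hs : 0 < s) :
    ∫ t in Ioi 0, t ^ j * Real.exp (-s * t) * f t = tiltedMoment α j s := by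
  induction j generalizing s with
  | zero => simp only [pow_zero, one_mul, hf s hs, tiltedMoment_zero hα.ne' hs]
  | succ j ih =>
    have heq : (fun u => ∫ t in Ioi 0, t ^ j * Real.exp (-u * t) * f t)
        =ᶠ[nhds s] tiltedMoment α j := by
      filter_upwards [Ioi_mem_nhds hs] with u hu using ih hu
    have hderiv := hasDerivAt_integral_pow_mul_exp_neg_mul
      (fun c hc => integrableOn_exp_neg_mul_of_laplace hf hc) j hs
    exact neg_injective <|
      (hderiv.congr_of_eventuallyEq heq.symm).unique (hasDerivAt_tiltedMoment hα j hs)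

lemma integral_pow_mul_exp_neg_mul_pos (hfnn : ∀ t ∈ Ioi (0 : ℝ), 0 ≤ f t)
    (hf : ∀ c : ℝ, 0 < c → ∫ t in Ioi 0, Real.exp (-c * t) * f t = Real.exp (-(c ^ α)))
    (n : ℕ) {s : ℝ} (hs : 0 < s) :
    0 < ∫ t in Ioi 0, t ^ n * Real.exp (-s * t) * f t := by
  have hnonneg : ∀ g : ℝ → ℝ, (∀ t, 0 < t → 0 ≤ g t) →
      0 ≤ᵐ[volume.restrict (Ioi 0)] fun t => g t * f t := fun g hg =>
    (ae_restrict_iff' measurableSet_Ioi).2 (Filter.Eventually.of_forall fun t ht =>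
      mul_nonneg (hg t ht) (hfnn t ht))
  have hlaplace : 0 < ∫ t in Ioi 0, Real.exp (-s * t) * f t := by
    rw [hf s hs]; exact Real.exp_pos _
  rw [setIntegral_pos_iff_support_of_nonneg_ae (hnonneg _ fun t _ => (Real.exp_pos _).le)
    (integrableOn_exp_neg_mul_of_laplace hf hs)] at hlaplace
  rw [setIntegral_pos_iff_support_of_nonneg_ae
    (hnonneg _ fun t ht => mul_nonneg (pow_nonneg ht.le n) (Real.exp_pos _).le)
    (integrableOn_pow_mul_exp_neg_mul (fun c hc => integrableOn_exp_neg_mul_of_laplace hf hc) hs n)]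
  convert hlaplace using 2
  ext t
  simp only [mem_inter_iff, Function.mem_support, mem_Ioi]
  constructor <;> rintro ⟨h, ht⟩ <;> exact ⟨by simp_all [ht.ne', (Real.exp_pos _).ne'], ht⟩

lemma Omega_rpow_pos (hα : 0 < α) (hfnn : ∀ t ∈ Ioi (0 : ℝ), 0 ≤ f t)
    (hf : ∀ c : ℝ, 0 < c → ∫ t in Ioi 0, Real.exp (-c * t) * f t = Real.exp (-(c ^ α)))
    (n : ℕ) {s : ℝ} (hs : 0 < s) : 0 < Omega α n (s ^ α) := by
  have h := integral_pow_mul_exp_neg_mul_pos hfnn hf n hs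
  rw [integral_pow_mul_exp_neg_mul hα hf n hs, tiltedMoment,
    mul_pos_iff_of_pos_right (Real.exp_pos _),
    mul_pos_iff_of_pos_right (Real.rpow_pos_of_pos hs _), mul_pos_iff_of_pos_left hα] at h
  exact h

end Laplace

lemma tilted_mul_gamma_density_eq {α lam s y E F D : ℝ} {m k : ℕ} (hlam : 0 < lam) (hs : 0 < s)
    (hy : 0 < y) (hkm : k ≤ m) :
    lam ^ ((m : ℝ) - k - α) * E * s ^ (m - k) * Real.exp (-lam * s) * F / D
        * (lam * s * ((lam * s * y) ^ ((k : ℝ) - 1) * Real.exp (-(lam * s * y)) / Real.Gamma k))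
      = lam ^ ((m : ℝ) - α) * E * y ^ ((k : ℝ) - 1) / (D * Real.Gamma k)
        * (s ^ m * Real.exp (-(lam * (1 + y)) * s) * F) := by
  have hlam_pow : lam ^ ((m : ℝ) - k - α) * (lam ^ ((k : ℝ) - 1) * lam) = lam ^ ((m : ℝ) - α) := by
    rw [← Real.rpow_add_one hlam.ne', ← Real.rpow_add hlam]
    ring_nf
  have hs_pow : s ^ (m - k) * (s ^ ((k : ℝ) - 1) * s) = s ^ m := by
    rw [← Real.rpow_add_one hs.ne', ← Real.rpow_natCast s (m - k), ← Real.rpow_add hs,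
      ← Real.rpow_natCast s m, Nat.cast_sub hkm]
    ring_nf
  have hexp : Real.exp (-lam * s) * Real.exp (-(lam * s * y))
      = Real.exp (-(lam * (1 + y)) * s) := by
    rw [← Real.exp_add]; ring_nf
  rw [Real.mul_rpow (by positivity) hy.le, Real.mul_rpow hlam.le hs.le, ← hlam_pow, ← hs_pow,
    ← hexp]
  ring

lemma lintegral_ofReal_const_mul_tiltedMoment {f : ℝ → ℝ} {α K c : ℝ} (hα : 0 < α)
    (hfnn : ∀ t ∈ Ioi (0 : ℝ), 0 ≤ f t)
    (hf : ∀ c : ℝ, 0 < c → ∫ t in Ioi 0, Real.exp (-c * t) * f t = Real.exp (-(c ^ α)))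
    (hK : 0 ≤ K) (hc : 0 < c) (m : ℕ) :
    ∫⁻ s in Ioi 0, ENNReal.ofReal (K * (s ^ m * Real.exp (-c * s) * f s))
      = ENNReal.ofReal (K * tiltedMoment α m c) := by
  rw [← ofReal_integral_eq_lintegral_ofReal, integral_const_mul,
    integral_pow_mul_exp_neg_mul hα hf m hc]
  · exact (integrableOn_pow_mul_exp_neg_mul
      (fun c hc => integrableOn_exp_neg_mul_of_laplace hf hc) hc m).const_mul K
  · exact (ae_restrict_iff' measurableSet_Ioi).2 (Filter.Eventually.of_forall fun s hs =>
      mul_nonneg hK (mul_nonneg (mul_nonneg (pow_nonneg (le_of_lt hs) m) (Real.exp_pos _).le)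
        (hfnn s hs)))

lemma const_mul_tiltedMoment_eq {α lam y D : ℝ} {m k : ℕ} (hα : α ≠ 0) (hlam : 0 < lam)
    (hy : 0 < y) (hk : 1 ≤ k) :
    lam ^ ((m : ℝ) - α) * Real.exp (lam ^ α) * y ^ ((k : ℝ) - 1) / (α * D * Real.Gamma k)
        * tiltedMoment α m (lam * (1 + y))
      = Omega α m (lam ^ α * (1 + y) ^ α) / (Real.Gamma k * D) * y ^ (k - 1)
        * (1 + y) ^ (α - m) * Real.exp (-(lam ^ α * (1 + y) ^ α - lam ^ α)) := by
  have hlam_pow : lam ^ (α - m) = (lam ^ ((m : ℝ) - α))⁻¹ := by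
    rw [← Real.rpow_neg hlam.le, neg_sub]
  have hy_pow : y ^ ((k : ℝ) - 1) = y ^ (k - 1) := by
    rw [← Real.rpow_natCast, Nat.cast_sub hk, Nat.cast_one]
  have hexp : Real.exp (lam ^ α) * Real.exp (-(lam ^ α * (1 + y) ^ α))
      = Real.exp (-(lam ^ α * (1 + y) ^ α - lam ^ α)) := by
    rw [← Real.exp_add]; ring_nf
  rw [tiltedMoment, Real.mul_rpow hlam.le (by positivity), Real.mul_rpow hlam.le (by positivity),
    hy_pow, hlam_pow, ← hexp]
  have : lam ^ ((m : ℝ) - α) ≠ 0 := (Real.rpow_pos_of_pos hlam _).ne'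
  field_simp

theorem stmt13_general (α : ℝ) (hα : α ∈ Set.Ioo (0 : ℝ) 1) (lam : ℝ) (hlam : 0 < lam)
    (m k : ℕ) (hk : 1 ≤ k) (hkm : k ≤ m) (f : ℝ → ℝ) (hfmeas : Measurable f)
    (hfnn : ∀ t ∈ Set.Ioi (0 : ℝ), 0 ≤ f t)
    (hflap : ∀ c : ℝ, 0 ≤ c →
      ∫ t in Set.Ioi (0 : ℝ), Real.exp (-c * t) * f t = Real.exp (-(c ^ α))) :
    Measure.map (fun p : ℝ × ℝ => p.2 / (lam * p.1))
        ((volume.withDensity ((Set.Ioi (0 : ℝ)).indicator fun t =>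
            ENNReal.ofReal (lam ^ ((m : ℝ) - (k : ℝ) - α) * Real.exp (lam ^ α) *
              t ^ (m - k) * Real.exp (-lam * t) * f t /
                (α * Omega α (m - k) (lam ^ α))))).prod (gammaM (k : ℝ)))
      = volume.withDensity ((Set.Ioi (0 : ℝ)).indicator fun y =>
          ENNReal.ofReal (Omega α m (lam ^ α * (1 + y) ^ α) /
              (Real.Gamma (k : ℝ) * Omega α (m - k) (lam ^ α)) *
            y ^ (k - 1) * (1 + y) ^ (α - (m : ℝ)) *
            Real.exp (-(lam ^ α * (1 + y) ^ α - lam ^ α)))) := by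
  obtain ⟨hα, -⟩ := hα
  replace hflap := fun c (hc : 0 < c) => hflap c hc.le
  have hΩ := Omega_rpow_pos hα hfnn hflap (m - k) hlam
  rw [gammaM, withDensity_indicator measurableSet_Ioi,
    map_div_const_mul_prod_withDensity hlam (by fun_prop)
      (Measurable.indicator (by fun_prop) measurableSet_Ioi)]
  congr 1
  funext y
  rcases le_or_gt y 0 with hy | hy
  · rw [indicator_of_notMem (show y ∉ Ioi 0 from not_lt.2 hy)]
    refine setLIntegral_eq_zero measurableSet_Ioi fun s (hs : 0 < s) => ?_
    simp [indicator_of_notMem (show lam * s * y ∉ Ioi 0 from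
      not_lt.2 (mul_nonpos_of_nonneg_of_nonpos (mul_pos hlam hs).le hy))]
  · have hK : 0 ≤ lam ^ ((m : ℝ) - α) * Real.exp (lam ^ α) * y ^ ((k : ℝ) - 1)
        / (α * Omega α (m - k) (lam ^ α) * Real.Gamma k) := by
      have := Real.Gamma_pos_of_pos (Nat.cast_pos.2 hk)
      positivity
    rw [indicator_of_mem (mem_Ioi.2 hy), ← const_mul_tiltedMoment_eq hα.ne' hlam hy hk,
      ← lintegral_ofReal_const_mul_tiltedMoment hα hfnn hflap hK (by positivity)]
    refine setLIntegral_congr_fun measurableSet_Ioi fun s (hs : 0 < s) => ?_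
    have := hfnn s hs
    rw [indicator_of_mem (mem_Ioi.2 (by positivity)), ← ENNReal.ofReal_mul (by positivity),
      ← ENNReal.ofReal_mul (by positivity), tilted_mul_gamma_density_eq hlam hs hy hkm, mul_assoc α]

/-- **Lemma 1.** If `S = S_{α,m-k}(λ)` has density
`λ^{m-k-α} e^{λ^α} t^{m-k} e^{-λ t} f_α(t)/(α Ω_{m-k}(λ^α))` and `G ~ Gamma(k)` is
independent, then `G/(λ S) = Y_{m,m-k}(λ)/λ` has density
`y ↦ (Ω_m(λ^α(1+y)^α)/(Γ(k) Ω_{m-k}(λ^α))) y^{k-1} (1+y)^{α-m} e^{-(λ^α(1+y)^α - λ^α)}`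
on `(0,∞)`. -/
theorem stmt13 (α : ℝ) (hα : α ∈ Set.Ioo (0 : ℝ) 1) (lam : ℝ) (hlam : 0 < lam)
    (m k : ℕ) (hm : 1 ≤ m) (hk : 1 ≤ k) (hkm : k ≤ m) (f : ℝ → ℝ) (hfmeas : Measurable f)
    (hfnn : ∀ t ∈ Set.Ioi (0 : ℝ), 0 ≤ f t)
    (hfint : ∫ t in Set.Ioi (0 : ℝ), f t = 1)
    (hflap : ∀ c : ℝ, 0 ≤ c →
      ∫ t in Set.Ioi (0 : ℝ), Real.exp (-c * t) * f t = Real.exp (-(c ^ α))) :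
    Measure.map (fun p : ℝ × ℝ => p.2 / (lam * p.1))
        ((volume.withDensity ((Set.Ioi (0 : ℝ)).indicator fun t =>
            ENNReal.ofReal (lam ^ ((m : ℝ) - (k : ℝ) - α) * Real.exp (lam ^ α) *
              t ^ (m - k) * Real.exp (-lam * t) * f t /
                (α * Omega α (m - k) (lam ^ α))))).prod (gammaM (k : ℝ)))
      = volume.withDensity ((Set.Ioi (0 : ℝ)).indicator fun y =>
          ENNReal.ofReal (Omega α m (lam ^ α * (1 + y) ^ α) /
              (Real.Gamma (k : ℝ) * Omega α (m - k) (lam ^ α)) *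
            y ^ (k - 1) * (1 + y) ^ (α - (m : ℝ)) *
            Real.exp (-(lam ^ α * (1 + y) ^ α - lam ^ α)))) :=
  stmt13_general α hα lam hlam m k hk hkm f hfmeas hfnn hflap
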